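/- Let γ > 1 and ℓ := 2/(γ−1). For every (V₋, C₋) ∈ ℝ² with 0 < −(1+V₋) < C₋, there exists a unique (V₊, C₊) ∈ ℝ² with 0 < C₊ < −(1+V₊) such that the pair satisfies the self-similar Rankine–Hugoniot relations. Conversely, for every (V₊, C₊) with 0 < C₊ < −(1+V₊) there exists a unique (V₋, C₋) with 0 < −(1+V₋) < C₋ such that the pair satisfies the self-similar Rankine–Hugoniot relations. (These are admissible self-similar 2-shocks in the case ξ̄/λ < 0, with left states in T²₋ := {0 < −(1+V) < C} and right states in T²₊ := {0 < C < −(1+V)}.) -/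

import Mathlib

/-- The self-similar Rankine–Hugoniot relations for the 1-d isentropic Euler
system (with `ℓ = 2/(γ−1)`), relating a left state `Pm = (V₋, C₋)` and a right
state `Pp = (V₊, C₊)`. -/
def RH (γ : ℝ) (Pm Pp : ℝ × ℝ) : Prop :=
  |Pm.2| ^ (2 / (γ - 1)) * (1 + Pm.1) = |Pp.2| ^ (2 / (γ - 1)) * (1 + Pp.1) ∧
  |Pm.2| ^ (2 / (γ - 1)) * ((1 + Pm.1) ^ 2 + Pm.2 ^ 2 / γ)
    = |Pp.2| ^ (2 / (γ - 1)) * ((1 + Pp.1) ^ 2 + Pp.2 ^ 2 / γ)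

open Real Set Filter Topology

/-!
For states with `C > 0`, the first relation says that both states carry the same mass flux
`m = C^ℓ·(−(1+V))`, which determines `V` from `C`; the second then says that they share the value
of `g(C) = m² C^(−ℓ) + C^(ℓ+2)/γ`. Since `(ℓ+2)/γ = ℓ`, `g'(C) = ℓ (C^(ℓ+1) − m² C^(−ℓ−1))`, so `g`
decreases strictly up to the sonic point `C* = m^(1/(ℓ+1))` (where `C = −(1+V)`), increases
strictly after it, and tends to `∞` at both ends of `(0, ∞)`. A state of flux `m > 0` lies in
`T²₊` iff `C < C*` and in `T²₋` iff `C > C*`, so every value of `g` above `g(C*)` is taken exactly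
once on each side.
-/

noncomputable def ell (γ : ℝ) : ℝ := 2 / (γ - 1)

noncomputable def fluxMomentum (γ L m c : ℝ) : ℝ := m ^ 2 * c ^ (-L) + c ^ (L + 2) / γ

noncomputable def sonicSpeed (L m : ℝ) : ℝ := m ^ (L + 1)⁻¹

noncomputable def massFlux (L : ℝ) (P : ℝ × ℝ) : ℝ := P.2 ^ L * -(1 + P.1)

noncomputable def stateOfFlux (L m c : ℝ) : ℝ × ℝ := (-1 - m * c ^ (-L), c)

def Tminus : Set (ℝ × ℝ) := {P | 0 < -(1 + P.1) ∧ -(1 + P.1) < P.2}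

def Tplus : Set (ℝ × ℝ) := {P | 0 < P.2 ∧ P.2 < -(1 + P.1)}

theorem ell_pos {γ : ℝ} (hγ : 1 < γ) : 0 < ell γ :=
  div_pos two_pos (sub_pos.2 hγ)

theorem ell_add_two {γ : ℝ} (hγ : 1 < γ) : ell γ + 2 = γ * ell γ := by
  have : γ - 1 ≠ 0 := (sub_pos.2 hγ).ne'
  unfold ell
  field_simp
  ring

section fluxMomentum

variable {γ L m : ℝ}

theorem continuousOn_fluxMomentum : ContinuousOn (fluxMomentum γ L m) (Ioi 0) := by
  intro c hc
  have hc : c ≠ 0 := ne_of_gt hc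
  exact ((continuousAt_const.mul (continuousAt_rpow_const _ _ (Or.inl hc))).add
    ((continuousAt_rpow_const _ _ (Or.inl hc)).div_const γ)).continuousWithinAt

theorem hasDerivAt_fluxMomentum (hL : 0 < L) (hid : L + 2 = γ * L) {c : ℝ} (hc : 0 < c) :
    HasDerivAt (fluxMomentum γ L m) (L * (c ^ (L + 1) - m ^ 2 / c ^ (L + 1))) c := by
  have hγ : γ ≠ 0 := by rintro rfl; linarith
  refine (((hasDerivAt_rpow_const (p := -L) (Or.inl hc.ne')).const_mul (m ^ 2)).add
    ((hasDerivAt_rpow_const (p := L + 2) (Or.inl hc.ne')).div_const γ)).congr_deriv ?_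
  rw [show -L - 1 = -(L + 1) by ring, show L + 2 - 1 = L + 1 by ring, rpow_neg hc.le, hid]
  field_simp
  ring

theorem strictAntiOn_fluxMomentum (hL : 0 < L) (hid : L + 2 = γ * L) (hm : 0 < m) :
    StrictAntiOn (fluxMomentum γ L m) (Ioc 0 (sonicSpeed L m)) := by
  refine strictAntiOn_of_hasDerivWithinAt_neg (convex_Ioc _ _)
    (f' := fun c => L * (c ^ (L + 1) - m ^ 2 / c ^ (L + 1)))
    (continuousOn_fluxMomentum.mono Ioc_subset_Ioi_self) (fun c hc => ?_) (fun c hc => ?_) <;>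
    rw [interior_Ioc] at hc
  · exact (hasDerivAt_fluxMomentum hL hid hc.1).hasDerivWithinAt
  · have hx : 0 < c ^ (L + 1) := rpow_pos_of_pos hc.1 _
    have hxm : c ^ (L + 1) < m := (lt_rpow_inv_iff_of_pos hc.1.le hm.le (by linarith)).1 hc.2
    have : c ^ (L + 1) < m ^ 2 / c ^ (L + 1) := by rw [lt_div_iff₀ hx]; nlinarith
    exact mul_neg_of_pos_of_neg hL (by linarith)

theorem strictMonoOn_fluxMomentum (hL : 0 < L) (hid : L + 2 = γ * L) (hm : 0 < m) :
    StrictMonoOn (fluxMomentum γ L m) (Ici (sonicSpeed L m)) := by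
  have hs : 0 < sonicSpeed L m := rpow_pos_of_pos hm _
  refine strictMonoOn_of_hasDerivWithinAt_pos (convex_Ici _)
    (f' := fun c => L * (c ^ (L + 1) - m ^ 2 / c ^ (L + 1)))
    (continuousOn_fluxMomentum.mono fun c hc => hs.trans_le hc) (fun c hc => ?_)
    (fun c hc => ?_) <;> rw [interior_Ici] at hc
  · exact (hasDerivAt_fluxMomentum hL hid (hs.trans hc)).hasDerivWithinAt
  · have hx : 0 < c ^ (L + 1) := rpow_pos_of_pos (hs.trans hc) _
    have hxm : m < c ^ (L + 1) :=
      (rpow_inv_lt_iff_of_pos hm.le (hs.trans hc).le (by linarith)).1 hc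
    have : m ^ 2 / c ^ (L + 1) < c ^ (L + 1) := by rw [div_lt_iff₀ hx]; nlinarith
    exact mul_pos hL (by linarith)

theorem tendsto_fluxMomentum_atTop (hγ : 0 < γ) (hL : 0 < L + 2) :
    Tendsto (fluxMomentum γ L m) atTop atTop := by
  refine tendsto_atTop_mono' _ ?_ ((tendsto_rpow_atTop hL).atTop_div_const hγ)
  filter_upwards [eventually_gt_atTop 0] with c hc
  exact le_add_of_nonneg_left (mul_nonneg (sq_nonneg m) (rpow_nonneg hc.le _))

theorem tendsto_fluxMomentum_nhdsGT_zero (hγ : 0 < γ) (hL : 0 < L) (hm : m ≠ 0) :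
    Tendsto (fluxMomentum γ L m) (𝓝[>] 0) atTop := by
  refine tendsto_atTop_mono' _ ?_
    ((tendsto_rpow_neg_nhdsGT_zero (neg_neg_of_pos hL)).const_mul_atTop (sq_pos_of_ne_zero hm))
  filter_upwards [self_mem_nhdsWithin] with c hc
  exact le_add_of_nonneg_right (div_nonneg (rpow_nonneg (le_of_lt hc) _) hγ.le)

theorem existsUnique_fluxMomentum_eq_of_sonicSpeed_lt (hL : 0 < L) (hid : L + 2 = γ * L)
    (hm : 0 < m) {b : ℝ} (hb : sonicSpeed L m < b) :
    ∃! a, a ∈ Ioo 0 (sonicSpeed L m) ∧ fluxMomentum γ L m a = fluxMomentum γ L m b := by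
  have hγ : 0 < γ := by nlinarith
  have hs : 0 < sonicSpeed L m := rpow_pos_of_pos hm _
  have hsb := strictMonoOn_fluxMomentum hL hid hm self_mem_Ici hb.le hb
  have hcont := continuousOn_fluxMomentum (γ := γ) (L := L) (m := m)
  obtain ⟨a, ha, hab⟩ := isPreconnected_Ioo.intermediate_value_Ioi
    (le_principal_iff.2 (Ioo_mem_nhdsLT hs)) (le_principal_iff.2 (Ioo_mem_nhdsGT hs))
    (hcont.mono Ioo_subset_Ioi_self)
    (((hcont.continuousAt (Ioi_mem_nhds hs)).tendsto).mono_left nhdsWithin_le_nhds)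
    (tendsto_fluxMomentum_nhdsGT_zero hγ hL hm.ne') hsb
  exact ⟨a, ⟨ha, hab⟩, fun a' ⟨ha', ha'b⟩ => (strictAntiOn_fluxMomentum hL hid hm).injOn
    (Ioo_subset_Ioc_self ha') (Ioo_subset_Ioc_self ha) (ha'b.trans hab.symm)⟩

theorem existsUnique_fluxMomentum_eq_of_lt_sonicSpeed (hL : 0 < L) (hid : L + 2 = γ * L)
    (hm : 0 < m) {a : ℝ} (ha : a ∈ Ioo 0 (sonicSpeed L m)) :
    ∃! b, b ∈ Ioi (sonicSpeed L m) ∧ fluxMomentum γ L m b = fluxMomentum γ L m a := by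
  have hγ : 0 < γ := by nlinarith
  have hs : 0 < sonicSpeed L m := rpow_pos_of_pos hm _
  have hsa := strictAntiOn_fluxMomentum hL hid hm (Ioo_subset_Ioc_self ha) ⟨hs, le_rfl⟩ ha.2
  obtain ⟨b, hb, hba⟩ := intermediate_value_Ioi
    (continuousOn_fluxMomentum.mono fun c hc => hs.trans_le hc)
    (tendsto_fluxMomentum_atTop hγ (by linarith)) hsa
  exact ⟨b, ⟨hb, hba⟩, fun b' ⟨hb', hb'a⟩ => (strictMonoOn_fluxMomentum hL hid hm).injOn
    (mem_Ici_of_Ioi hb') (mem_Ici_of_Ioi hb) (hb'a.trans hba.symm)⟩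

end fluxMomentum

section states

variable {L m : ℝ}

theorem massFlux_stateOfFlux {c : ℝ} (hc : 0 < c) : massFlux L (stateOfFlux L m c) = m := by
  have : c ^ L ≠ 0 := (rpow_pos_of_pos hc L).ne'
  simp only [massFlux, stateOfFlux, rpow_neg hc.le]
  field_simp
  ring

theorem massFlux_eq_iff {P : ℝ × ℝ} (hP : 0 < P.2) :
    massFlux L P = m ↔ P = stateOfFlux L m P.2 := by
  constructor
  · rintro rfl
    have : P.2 ^ L ≠ 0 := (rpow_pos_of_pos hP L).ne'
    ext
    · simp only [massFlux, stateOfFlux, rpow_neg hP.le]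
      field_simp
      ring
    · rfl
  · intro h
    rw [h, massFlux_stateOfFlux hP]

theorem momentum_eq_fluxMomentum (γ : ℝ) {P : ℝ × ℝ} (hP : 0 < P.2) :
    P.2 ^ L * ((1 + P.1) ^ 2 + P.2 ^ 2 / γ) = fluxMomentum γ L (massFlux L P) P.2 := by
  have : P.2 ^ L ≠ 0 := (rpow_pos_of_pos hP L).ne'
  simp only [fluxMomentum, massFlux, rpow_neg hP.le, rpow_add hP, rpow_two]
  field_simp

theorem lt_mul_rpow_neg_iff (hL : 0 < L + 1) (hm : 0 ≤ m) {c : ℝ} (hc : 0 < c) :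
    c < m * c ^ (-L) ↔ c < sonicSpeed L m := by
  rw [rpow_neg hc.le, ← div_eq_mul_inv, lt_div_iff₀ (rpow_pos_of_pos hc L), mul_comm,
    ← rpow_add_one hc.ne', sonicSpeed, lt_rpow_inv_iff_of_pos hc.le hm hL]

theorem mul_rpow_neg_lt_iff (hL : 0 < L + 1) (hm : 0 ≤ m) {c : ℝ} (hc : 0 < c) :
    m * c ^ (-L) < c ↔ sonicSpeed L m < c := by
  rw [rpow_neg hc.le, ← div_eq_mul_inv, div_lt_iff₀ (rpow_pos_of_pos hc L), mul_comm c,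
    ← rpow_add_one hc.ne', sonicSpeed, rpow_inv_lt_iff_of_pos hm hc.le hL]

theorem stateOfFlux_mem_Tplus_iff (hL : 0 < L + 1) (hm : 0 ≤ m) {c : ℝ} :
    stateOfFlux L m c ∈ Tplus ↔ c ∈ Ioo 0 (sonicSpeed L m) := by
  simp only [Tplus, stateOfFlux, mem_ofPred_eq, mem_Ioo, show ∀ x : ℝ, -(1 + (-1 - x)) = x by
    intro x; ring]
  exact and_congr_right (lt_mul_rpow_neg_iff hL hm)

theorem stateOfFlux_mem_Tminus_iff (hL : 0 < L + 1) (hm : 0 < m) {c : ℝ} :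
    stateOfFlux L m c ∈ Tminus ↔ c ∈ Ioi (sonicSpeed L m) := by
  simp only [Tminus, stateOfFlux, mem_ofPred_eq, mem_Ioi, show ∀ x : ℝ, -(1 + (-1 - x)) = x by
    intro x; ring]
  constructor
  · rintro ⟨hpos, hlt⟩
    exact (mul_rpow_neg_lt_iff hL hm.le (hpos.trans hlt)).1 hlt
  · intro hc
    have hc0 : 0 < c := (rpow_pos_of_pos hm _).trans hc
    exact ⟨mul_pos hm (rpow_pos_of_pos hc0 _), (mul_rpow_neg_lt_iff hL hm.le hc0).2 hc⟩

theorem massFlux_pos_of_mem_Tminus {P : ℝ × ℝ} (hP : P ∈ Tminus) : 0 < massFlux L P :=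
  mul_pos (rpow_pos_of_pos (hP.1.trans hP.2) _) hP.1

theorem massFlux_pos_of_mem_Tplus {P : ℝ × ℝ} (hP : P ∈ Tplus) : 0 < massFlux L P :=
  mul_pos (rpow_pos_of_pos hP.1 _) (hP.1.trans hP.2)

theorem sonicSpeed_lt_of_mem_Tminus (hL : 0 < L + 1) {P : ℝ × ℝ} (hP : P ∈ Tminus) :
    sonicSpeed L (massFlux L P) < P.2 := by
  have hm := massFlux_pos_of_mem_Tminus (L := L) hP
  rw [(massFlux_eq_iff (hP.1.trans hP.2)).1 rfl] at hP
  exact (stateOfFlux_mem_Tminus_iff hL hm).1 hP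

theorem lt_sonicSpeed_of_mem_Tplus (hL : 0 < L + 1) {P : ℝ × ℝ} (hP : P ∈ Tplus) :
    P.2 < sonicSpeed L (massFlux L P) := by
  have hm := massFlux_pos_of_mem_Tplus (L := L) hP
  rw [(massFlux_eq_iff hP.1).1 rfl] at hP
  exact ((stateOfFlux_mem_Tplus_iff hL hm.le).1 hP).2

end states

theorem RH.comm {γ : ℝ} {P Q : ℝ × ℝ} : RH γ P Q ↔ RH γ Q P := by
  simp only [RH, eq_comm]

theorem rh_iff {γ : ℝ} {P Q : ℝ × ℝ} (hP : 0 < P.2) (hQ : 0 < Q.2) :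
    RH γ P Q ↔ Q = stateOfFlux (ell γ) (massFlux (ell γ) P) Q.2 ∧
      fluxMomentum γ (ell γ) (massFlux (ell γ) P) Q.2 =
        fluxMomentum γ (ell γ) (massFlux (ell γ) P) P.2 := by
  rw [← massFlux_eq_iff hQ, RH, ← ell, abs_of_pos hP, abs_of_pos hQ,
    momentum_eq_fluxMomentum γ hP, momentum_eq_fluxMomentum γ hQ]
  have hflux : P.2 ^ ell γ * (1 + P.1) = Q.2 ^ ell γ * (1 + Q.1) ↔
      massFlux (ell γ) Q = massFlux (ell γ) P := by
    unfold massFlux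
    constructor <;> intro h <;> linarith
  rw [hflux]
  exact and_congr_right fun h => by rw [h, eq_comm]

theorem existsUnique_mem_and_rh {γ : ℝ} {P : ℝ × ℝ} (hP : 0 < P.2) {T : Set (ℝ × ℝ)}
    (hT : ∀ Q ∈ T, 0 < Q.2) {I : Set ℝ}
    (hTI : ∀ c, stateOfFlux (ell γ) (massFlux (ell γ) P) c ∈ T ↔ c ∈ I)
    (hI : ∃! c, c ∈ I ∧ fluxMomentum γ (ell γ) (massFlux (ell γ) P) c =
      fluxMomentum γ (ell γ) (massFlux (ell γ) P) P.2) :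
    ∃! Q, Q ∈ T ∧ RH γ P Q := by
  obtain ⟨c, ⟨hcI, hc⟩, huniq⟩ := hI
  have hc0 : 0 < c := hT _ ((hTI c).2 hcI)
  refine ⟨_, ⟨(hTI c).2 hcI, (rh_iff hP hc0).2 ⟨rfl, hc⟩⟩, fun Q ⟨hQT, hQ⟩ => ?_⟩
  obtain ⟨hQeq, hQmom⟩ := (rh_iff hP (hT Q hQT)).1 hQ
  rw [hQeq] at hQT ⊢
  rw [huniq Q.2 ⟨(hTI _).1 hQT, hQmom⟩]

/-- admissible self-similar 2-shocks with `ξ̄/λ < 0`: each left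
state in `T²₋ = {0 < −(1+V) < C}` has a unique right state in
`T²₊ = {0 < C < −(1+V)}` satisfying the Rankine–Hugoniot relations, and
conversely. -/
theorem stmt_17 (γ : ℝ) (hγ : 1 < γ) :
    (∀ Vm Cm : ℝ, 0 < -(1 + Vm) → -(1 + Vm) < Cm →
      ∃! Pp : ℝ × ℝ, (0 < Pp.2 ∧ Pp.2 < -(1 + Pp.1)) ∧ RH γ (Vm, Cm) Pp) ∧
    (∀ Vp Cp : ℝ, 0 < Cp → Cp < -(1 + Vp) →
      ∃! Pm : ℝ × ℝ, (0 < -(1 + Pm.1) ∧ -(1 + Pm.1) < Pm.2) ∧ RH γ Pm (Vp, Cp)) := by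
  have hL := ell_pos hγ
  have hid := ell_add_two hγ
  have hL1 : 0 < ell γ + 1 := by linarith
  refine ⟨fun Vm Cm hu hlt => ?_, fun Vp Cp hC hlt => ?_⟩
  · have hP : (Vm, Cm) ∈ Tminus := ⟨hu, hlt⟩
    have hm := massFlux_pos_of_mem_Tminus (L := ell γ) hP
    exact existsUnique_mem_and_rh (T := Tplus) (hu.trans hlt) (fun Q hQ => hQ.1)
      (fun c => stateOfFlux_mem_Tplus_iff hL1 hm.le)
      (existsUnique_fluxMomentum_eq_of_sonicSpeed_lt hL hid hm
        (sonicSpeed_lt_of_mem_Tminus hL1 hP))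
  · have hP : (Vp, Cp) ∈ Tplus := ⟨hC, hlt⟩
    have hm := massFlux_pos_of_mem_Tplus (L := ell γ) hP
    simp only [RH.comm (Q := (Vp, Cp))]
    exact existsUnique_mem_and_rh (T := Tminus) hC (fun Q hQ => hQ.1.trans hQ.2)
      (fun c => stateOfFlux_mem_Tminus_iff hL1 hm)
      (existsUnique_fluxMomentum_eq_of_lt_sonicSpeed hL hid hm
        ⟨hC, lt_sonicSpeed_of_mem_Tplus hL1 hP⟩)
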